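/- arXiv:1805.00601 — 6 statements merged into one kernel-verified Lean document; each statement's English description precedes it below -/
import Mathlib

section
/- For $b, m, h > 0$, the inequality $\psi_h(t) = -m^2 + t^2(h-t)^{2b} \le 0$ holds for all $t \in (0,h)$ if and only if $h \le h^\# := \frac{b+1}{b^{b/(b+1)}} m^{1/(b+1)}$. -/
/-!
Writing `t² (h - t)^{2b} = (t (h - t)^b)²`, the condition says `t (h - t)^b ≤ m` on `(0, h)`.
By weighted AM-GM applied to `t` and `(h - t)/b` with weights `1/(b+1)` and `b/(b+1)`, the
maximum of `t (h - t)^b` is `b^b (h/(b+1))^{b+1}`, attained at `t = h/(b+1)`. This maximum is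
increasing in `h` and equals `m` exactly at `h = h^#`.
-/

open Real Set

section

variable {b h : ℝ}

lemma mul_sub_rpow_le (hb : 0 < b) {t : ℝ} (ht : 0 ≤ t) (hth : t ≤ h) :
    t * (h - t) ^ b ≤ b ^ b * (h / (b + 1)) ^ (b + 1) := by
  have hb1 : 0 < b + 1 := by linarith
  have hu : 0 ≤ h - t := by linarith
  have hw : 1 / (b + 1) + b / (b + 1) = 1 := by field_simp; ring
  have amgm := geom_mean_le_arith_mean2_weighted (by positivity) (by positivity)
    ht (by positivity : 0 ≤ (h - t) / b) hw
  have hmean : 1 / (b + 1) * t + b / (b + 1) * ((h - t) / b) = h / (b + 1) := by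
    field_simp; ring
  have hgeom : (t ^ (1 / (b + 1)) * ((h - t) / b) ^ (b / (b + 1))) ^ (b + 1)
      = t * (h - t) ^ b / b ^ b := by
    rw [mul_rpow (by positivity) (by positivity), ← rpow_mul ht, ← rpow_mul (by positivity),
      one_div_mul_cancel hb1.ne', div_mul_cancel₀ b hb1.ne', rpow_one, div_rpow hu hb.le,
      mul_div_assoc]
  have := rpow_le_rpow (by positivity) (hmean ▸ amgm) hb1.le
  rwa [hgeom, div_le_iff₀' (by positivity)] at this

lemma mul_sub_rpow_at_peak (hb : 0 ≤ b) (hh : 0 ≤ h) :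
    h / (b + 1) * (h - h / (b + 1)) ^ b = b ^ b * (h / (b + 1)) ^ (b + 1) := by
  have hb1 : b + 1 ≠ 0 := by positivity
  have hsub : h - h / (b + 1) = b * (h / (b + 1)) := by field_simp; ring
  rw [hsub, mul_rpow hb (by positivity), rpow_add_one' (by positivity) hb1]
  ring

lemma forall_mul_sub_rpow_le_iff (hb : 0 < b) (hh : 0 < h) {m : ℝ} :
    (∀ t ∈ Ioo 0 h, t * (h - t) ^ b ≤ m) ↔ b ^ b * (h / (b + 1)) ^ (b + 1) ≤ m := by
  refine ⟨fun hle => ?_, fun hle t ht => (mul_sub_rpow_le hb ht.1.le ht.2.le).trans hle⟩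
  have hpeak : h / (b + 1) ∈ Ioo 0 h :=
    ⟨by positivity, div_lt_self hh (by linarith)⟩
  simpa only [mul_sub_rpow_at_peak hb.le hh.le] using hle _ hpeak

lemma peak_at_sharp_eq (hb : 0 < b) {m : ℝ} (hm : 0 ≤ m) :
    b ^ b * ((b + 1) / b ^ (b / (b + 1)) * m ^ (1 / (b + 1)) / (b + 1)) ^ (b + 1) = m := by
  have hb1 : b + 1 ≠ 0 := by positivity
  have hdiv : (b + 1) / b ^ (b / (b + 1)) * m ^ (1 / (b + 1)) / (b + 1)
      = m ^ (1 / (b + 1)) / b ^ (b / (b + 1)) := by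
    field_simp
  rw [hdiv, div_rpow (by positivity) (by positivity), ← rpow_mul hm, ← rpow_mul hb.le,
    one_div_mul_cancel hb1, div_mul_cancel₀ b hb1, rpow_one]
  field_simp

lemma peak_le_iff (hb : 0 < b) (hh : 0 ≤ h) {m : ℝ} (hm : 0 ≤ m) :
    b ^ b * (h / (b + 1)) ^ (b + 1) ≤ m ↔ h ≤ (b + 1) / b ^ (b / (b + 1)) * m ^ (1 / (b + 1)) := by
  have hb1 : 0 < b + 1 := by linarith
  conv_lhs => rw [← peak_at_sharp_eq hb hm]
  rw [mul_le_mul_iff_right₀ (by positivity), rpow_le_rpow_iff (by positivity) (by positivity) hb1,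
    div_le_div_iff_of_pos_right hb1]

end

/-- For b, m, h > 0, ψ_h(t) = -m² + t²(h-t)^{2b} ≤ 0 for all t ∈ (0,h)
iff h ≤ h^# = (b+1)/b^{b/(b+1)} · m^{1/(b+1)}. -/
theorem psi_nonpos_iff (b m h : ℝ) (hb : 0 < b) (hm : 0 < m) (hh : 0 < h) :
    (∀ t ∈ Set.Ioo (0:ℝ) h, -m^2 + t^2 * (h - t) ^ (2*b) ≤ 0) ↔
      h ≤ (b+1) / b ^ (b/(b+1)) * m ^ (1/(b+1)) := by
  have hsq : ∀ t ∈ Ioo 0 h, -m ^ 2 + t ^ 2 * (h - t) ^ (2 * b) ≤ 0 ↔ t * (h - t) ^ b ≤ m := by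
    rintro t ⟨ht, hth⟩
    have hu : 0 ≤ h - t := by linarith
    rw [mul_comm 2 b, rpow_mul hu, rpow_two, ← mul_pow, neg_add_nonpos_iff,
      pow_le_pow_iff_left₀ (by positivity) hm.le two_ne_zero]
  rw [forall₂_congr hsq, forall_mul_sub_rpow_le_iff hb hh, peak_le_iff hb hh.le hm.le]
end

section
/- For $b, m, h > 0$ with $h > h^\# = \frac{b+1}{b^{b/(b+1)}} m^{1/(b+1)}$, the cubic-type equation $t^2(h-t)^{2b} = m^2$ has exactly two solutions $t_h, T_h$ in $(0,h)$, satisfying $0 < t_h < \frac{h}{b+1} < T_h < h$. -/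
/-!
Both sides are nonnegative on `(0, h)`, so the equation is `g t = m` for `g t = t * (h - t) ^ b`.
Since `g' t = (h - t) ^ (b - 1) * (h - (b + 1) * t)`, the function `g` increases strictly on
`[0, h / (b + 1)]` and decreases strictly on `[h / (b + 1), h]`, vanishing at both ends. Its peak
value is `h ^ (b + 1) * b ^ b / (b + 1) ^ (b + 1)`, which exceeds `m` exactly when `h > h^#`;
the intermediate value theorem then gives one solution on each side of the peak, and strict
monotonicity rules out any other.
-/

open Set

theorem exists_two_eq_of_strictMonoOn_of_strictAntiOn {g : ℝ → ℝ} {a p c y : ℝ}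
    (hap : a ≤ p) (hpc : p ≤ c) (hg : ContinuousOn g (Icc a c))
    (hmono : StrictMonoOn g (Icc a p)) (hanti : StrictAntiOn g (Icc p c))
    (ha : g a < y) (hc : g c < y) (hp : y < g p) :
    ∃ t T, t ∈ Ioo a p ∧ T ∈ Ioo p c ∧ g t = y ∧ g T = y ∧
      ∀ s ∈ Icc a c, g s = y → s = t ∨ s = T := by
  obtain ⟨t, ht, hgt⟩ := intermediate_value_Ioo hap (hg.mono (Icc_subset_Icc_right hpc)) ⟨ha, hp⟩
  obtain ⟨T, hT, hgT⟩ := intermediate_value_Ioo' hpc (hg.mono (Icc_subset_Icc_left hap)) ⟨hc, hp⟩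
  refine ⟨t, T, ht, hT, hgt, hgT, fun s hs hgs => ?_⟩
  rcases le_or_gt s p with hsp | hsp
  · exact .inl <| hmono.injOn ⟨hs.1, hsp⟩ (Ioo_subset_Icc_self ht) (hgs.trans hgt.symm)
  · exact .inr <| hanti.injOn ⟨hsp.le, hs.2⟩ (Ioo_subset_Icc_self hT) (hgs.trans hgT.symm)

section MulSubRpow

variable {b h : ℝ}

theorem continuous_mul_sub_rpow (hb : 0 ≤ b) : Continuous fun s : ℝ => s * (h - s) ^ b :=
  continuous_id.mul <| (continuous_const.sub continuous_id).rpow_const fun _ => .inr hb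

theorem hasDerivAt_mul_sub_rpow {x : ℝ} (hx : x < h) :
    HasDerivAt (fun s : ℝ => s * (h - s) ^ b) ((h - x) ^ (b - 1) * (h - (b + 1) * x)) x := by
  have hhx : 0 < h - x := sub_pos.mpr hx
  have hsub : HasDerivAt (fun s : ℝ => (h - s) ^ b) (b * (h - x) ^ (b - 1) * -1) x :=
    (Real.hasDerivAt_rpow_const (.inl hhx.ne')).comp x (by simpa using (hasDerivAt_id x).const_sub h)
  have hmul : HasDerivAt (fun s : ℝ => s * (h - s) ^ b)
      (1 * (h - x) ^ b + x * (b * (h - x) ^ (b - 1) * -1)) x := (hasDerivAt_id x).mul hsub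
  convert hmul using 1
  rw [Real.rpow_sub hhx, Real.rpow_one]
  field_simp
  ring

theorem strictMonoOn_mul_sub_rpow (hb : 0 ≤ b) (hh : 0 < h) :
    StrictMonoOn (fun s : ℝ => s * (h - s) ^ b) (Icc 0 (h / (b + 1))) := by
  refine strictMonoOn_of_deriv_pos (convex_Icc _ _) (continuous_mul_sub_rpow hb).continuousOn
    fun x hx => ?_
  rw [interior_Icc] at hx
  have hxh : x < h := hx.2.trans_le (div_le_self hh.le (by linarith))
  have hpeak : (b + 1) * x < h := (lt_div_iff₀' (by linarith)).mp hx.2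
  rw [(hasDerivAt_mul_sub_rpow hxh).deriv]
  exact mul_pos (Real.rpow_pos_of_pos (sub_pos.mpr hxh) _) (sub_pos.mpr hpeak)

theorem strictAntiOn_mul_sub_rpow (hb : 0 ≤ b) :
    StrictAntiOn (fun s : ℝ => s * (h - s) ^ b) (Icc (h / (b + 1)) h) := by
  refine strictAntiOn_of_deriv_neg (convex_Icc _ _) (continuous_mul_sub_rpow hb).continuousOn
    fun x hx => ?_
  rw [interior_Icc] at hx
  have hpeak : h < (b + 1) * x := (div_lt_iff₀' (by linarith)).mp hx.1
  rw [(hasDerivAt_mul_sub_rpow hx.2).deriv]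
  exact mul_neg_of_pos_of_neg (Real.rpow_pos_of_pos (sub_pos.mpr hx.2) _) (by linarith)

theorem mul_sub_rpow_div_add_one (hb : 0 ≤ b) (hh : 0 < h) :
    h / (b + 1) * (h - h / (b + 1)) ^ b = h ^ (b + 1) * b ^ b / (b + 1) ^ (b + 1) := by
  have hb1 : 0 < b + 1 := by linarith
  have hsub : h - h / (b + 1) = h * b / (b + 1) := by field_simp; ring
  have hpow : 0 < (b + 1) ^ b := Real.rpow_pos_of_pos hb1 b
  rw [hsub, Real.div_rpow (by positivity) hb1.le, Real.mul_rpow hh.le hb,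
    Real.rpow_add_one hh.ne', Real.rpow_add_one hb1.ne']
  field_simp

theorem threshold_rpow_add_one (hb : 0 < b) {m : ℝ} (hm : 0 ≤ m) :
    ((b + 1) / b ^ (b / (b + 1)) * m ^ (1 / (b + 1))) ^ (b + 1)
      = (b + 1) ^ (b + 1) / b ^ b * m := by
  have hb1 : b + 1 ≠ 0 := by linarith
  rw [Real.mul_rpow (by positivity) (by positivity), Real.div_rpow (by linarith) (by positivity),
    ← Real.rpow_mul hb.le, ← Real.rpow_mul hm, div_mul_cancel₀ b hb1,
    one_div_mul_cancel hb1, Real.rpow_one]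

theorem lt_mul_sub_rpow_of_threshold_lt (hb : 0 < b) {m : ℝ} (hm : 0 < m)
    (hh : (b + 1) / b ^ (b / (b + 1)) * m ^ (1 / (b + 1)) < h) :
    m < h / (b + 1) * (h - h / (b + 1)) ^ b := by
  have hb1 : 0 < b + 1 := by linarith
  have hthreshold : 0 < (b + 1) / b ^ (b / (b + 1)) * m ^ (1 / (b + 1)) := by positivity
  have hpow := Real.rpow_lt_rpow hthreshold.le hh hb1
  rw [threshold_rpow_add_one hb hm.le, div_mul_eq_mul_div,
    div_lt_iff₀ (Real.rpow_pos_of_pos hb b)] at hpow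
  rw [mul_sub_rpow_div_add_one hb.le (hthreshold.trans hh),
    lt_div_iff₀ (Real.rpow_pos_of_pos hb1 _)]
  linarith

end MulSubRpow

theorem sq_mul_rpow_two_mul {x y : ℝ} (hy : 0 ≤ y) (b : ℝ) :
    x ^ 2 * y ^ (2 * b) = (x * y ^ b) ^ 2 := by
  rw [mul_comm 2 b, show (2 : ℝ) = (2 : ℕ) by norm_num, Real.rpow_mul_natCast hy, mul_pow]

/-- For h > h^#, the equation t²(h-t)^{2b} = m² has exactly two solutions
t_h, T_h in (0,h), with 0 < t_h < h/(b+1) < T_h < h. -/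
theorem two_solutions (b m h : ℝ) (hb : 0 < b) (hm : 0 < m)
    (hh : (b+1) / b ^ (b/(b+1)) * m ^ (1/(b+1)) < h) :
    ∃ t T : ℝ, 0 < t ∧ t < h/(b+1) ∧ h/(b+1) < T ∧ T < h ∧
      t^2 * (h - t) ^ (2*b) = m^2 ∧ T^2 * (h - T) ^ (2*b) = m^2 ∧
      ∀ s ∈ Set.Ioo (0:ℝ) h, s^2 * (h - s) ^ (2*b) = m^2 → s = t ∨ s = T := by
  have hh0 : 0 < h := lt_trans (by positivity) hh
  obtain ⟨t, T, ht, hT, hgt, hgT, huniq⟩ :=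
    exists_two_eq_of_strictMonoOn_of_strictAntiOn (g := fun s => s * (h - s) ^ b)
      (by positivity) (div_le_self hh0.le (by linarith))
      (continuous_mul_sub_rpow hb.le).continuousOn (strictMonoOn_mul_sub_rpow hb.le hh0)
      (strictAntiOn_mul_sub_rpow hb.le) (by simpa using hm)
      (by simpa [Real.zero_rpow hb.ne'] using hm) (lt_mul_sub_rpow_of_threshold_lt hb hm hh)
  have ht' : t < h := (ht.2.trans hT.1).trans hT.2
  refine ⟨t, T, ht.1, ht.2, hT.1, hT.2, ?_, ?_, fun s hs hsm => huniq s (Ioo_subset_Icc_self hs) ?_⟩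
  · rw [sq_mul_rpow_two_mul (sub_nonneg.mpr ht'.le), hgt]
  · rw [sq_mul_rpow_two_mul (sub_nonneg.mpr hT.2.le), hgT]
  · have hpos : 0 < s * (h - s) ^ b := mul_pos hs.1 (Real.rpow_pos_of_pos (sub_pos.mpr hs.2) b)
    rwa [sq_mul_rpow_two_mul (sub_nonneg.mpr hs.2.le), pow_left_inj₀ hpos.le hm.le two_ne_zero]
      at hsm
end

section
/- Let $b, m > 0$ and for $h > h^\#$ let $t_h \in (0, h/(b+1))$ be the smaller solution of $t^2(h-t)^{2b} = m^2$ in $(0,h)$. Then $h \mapsto t_h$ is strictly decreasing on $(h^\#, \infty)$: if $h^\# < h_1 < h_2$ then $t_{h_2} < t_{h_1}$. -/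
lemma aux_mono (b h : ℝ) (hb : 0 < b) (hh : 0 < h) :
    StrictMonoOn (fun t => t * (h - t) ^ b) (Set.Icc 0 (h/(b+1))) := by
  have hb1 : (0:ℝ) < b + 1 := by linarith
  have hlt : h/(b+1) < h := by
    rw [div_lt_iff₀ hb1]; nlinarith
  apply strictMonoOn_of_deriv_pos (convex_Icc _ _)
  · apply ContinuousOn.mul continuousOn_id
    apply ContinuousOn.rpow_const (by fun_prop)
    intro t ht
    left
    have : h - t > 0 := by
      have := ht.2
      linarith
    exact this.ne'
  · intro t ht
    rw [interior_Icc] at ht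
    obtain ⟨ht0, ht1⟩ := ht
    have h1 : 0 < h - t := by linarith
    have hinner : HasDerivAt (fun x : ℝ => (h - x) ^ b) ((b * (h - t) ^ (b - 1)) * (-1)) t := by
      have := (Real.hasDerivAt_rpow_const (x := h - t) (p := b) (Or.inl h1.ne'))
      exact this.comp t (((hasDerivAt_id t).const_sub h))
    have hd : HasDerivAt (fun x : ℝ => x * (h - x) ^ b)
        (1 * (h - t) ^ b + t * ((b * (h - t) ^ (b - 1)) * (-1))) t :=
      (hasDerivAt_id t).mul hinner
    rw [hd.deriv]
    have hsplit : (h - t) ^ b = (h - t) * (h - t) ^ (b - 1) := by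
      rw [show b = 1 + (b - 1) by ring, Real.rpow_add h1]
      simp [Real.rpow_one]
    have hp : 0 < (h - t) ^ (b - 1) := Real.rpow_pos_of_pos h1 _
    have hkey : 0 < h - (b + 1) * t := by
      have := (lt_div_iff₀ hb1).mp ht1
      nlinarith
    nlinarith [hp, hkey, hsplit]

/-- The map h ↦ t_h (smaller solution of t²(h-t)^{2b} = m² in (0, h/(b+1)))
is strictly decreasing on (h^#, ∞). -/
theorem th_strict_anti (b m h₁ h₂ t₁ t₂ : ℝ) (hb : 0 < b) (hm : 0 < m)
    (hh₁ : (b+1) / b ^ (b/(b+1)) * m ^ (1/(b+1)) < h₁) (h12 : h₁ < h₂)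
    (ht₁ : 0 < t₁) (ht₁' : t₁ < h₁/(b+1)) (he₁ : t₁^2 * (h₁ - t₁) ^ (2*b) = m^2)
    (ht₂ : 0 < t₂) (ht₂' : t₂ < h₂/(b+1)) (he₂ : t₂^2 * (h₂ - t₂) ^ (2*b) = m^2) :
    t₂ < t₁ := by
  have hb1 : (0:ℝ) < b + 1 := by linarith
  have hsharp : 0 < (b+1) / b ^ (b/(b+1)) * m ^ (1/(b+1)) := by positivity
  have h1pos : 0 < h₁ := lt_trans hsharp hh₁
  have h2pos : 0 < h₂ := lt_trans h1pos h12
  have ht₁h : t₁ < h₁ := by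
    have : h₁/(b+1) < h₁ := by rw [div_lt_iff₀ hb1]; nlinarith
    linarith
  have ht₂h : t₂ < h₂ := by
    have : h₂/(b+1) < h₂ := by rw [div_lt_iff₀ hb1]; nlinarith
    linarith
  have hm1 : t₁ * (h₁ - t₁) ^ b = m := by
    have hpos : 0 < t₁ * (h₁ - t₁) ^ b := by
      have := Real.rpow_pos_of_pos (show (0:ℝ) < h₁ - t₁ by linarith) b
      positivity
    have hsq : (t₁ * (h₁ - t₁) ^ b) ^ 2 = m ^ 2 := by
      rw [mul_pow, ← Real.rpow_natCast ((h₁ - t₁) ^ b) 2, ← Real.rpow_mul (by linarith)]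
      rw [← he₁]; ring_nf
    nlinarith [hpos, hsq]
  have hm2 : t₂ * (h₂ - t₂) ^ b = m := by
    have hpos : 0 < t₂ * (h₂ - t₂) ^ b := by
      have := Real.rpow_pos_of_pos (show (0:ℝ) < h₂ - t₂ by linarith) b
      positivity
    have hsq : (t₂ * (h₂ - t₂) ^ b) ^ 2 = m ^ 2 := by
      rw [mul_pow, ← Real.rpow_natCast ((h₂ - t₂) ^ b) 2, ← Real.rpow_mul (by linarith)]
      rw [← he₂]; ring_nf
    nlinarith [hpos, hsq]
  by_contra hcon
  push_neg at hcon
  -- t₁ ≤ t₂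
  have hmono := aux_mono b h₂ hb h2pos
  have ht1mem : t₁ ∈ Set.Icc 0 (h₂/(b+1)) := ⟨ht₁.le, le_trans hcon ht₂'.le⟩
  have ht2mem : t₂ ∈ Set.Icc 0 (h₂/(b+1)) := ⟨ht₂.le, ht₂'.le⟩
  have hle : t₁ * (h₂ - t₁) ^ b ≤ t₂ * (h₂ - t₂) ^ b := by
    rcases eq_or_lt_of_le hcon with h | h
    · rw [h]
    · exact (hmono ht1mem ht2mem h).le
  have hgt : t₁ * (h₁ - t₁) ^ b < t₁ * (h₂ - t₁) ^ b := by
    apply mul_lt_mul_of_pos_left _ ht₁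
    apply Real.rpow_lt_rpow (by linarith) (by linarith) hb
  rw [hm1, hm2] at *
  linarith
end

section
/- Let $b, m > 0$ and $h > h^\#$, and let $g_h(t) = \frac{m^2}{t} + \frac{h^{2b+1} - (h-\min\{h,t\})^{2b+1}}{2b+1}$ with $t_h < T_h$ the two solutions of $t^2(h-t)^{2b} = m^2$ in $(0,h)$. Then $g_h$ is strictly decreasing on $(0, t_h)$, strictly increasing on $(t_h, T_h)$, and strictly decreasing on $(T_h, \infty)$. -/
/-!
On `(0, h)` the derivative of `g_h` is `(φ(s) - m²) / s²` with `φ(s) = s²(h - s)^{2b}`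
(`critLevel` below). As `φ' = 2s(h - s)^{2b-1}(h - (b+1)s)`, `φ` increases up to `h/(b+1)` and
decreases after it; hence `φ < m²` on `(0, t_h)` and `(T_h, h)`, and `φ > m²` on
`(t_h, T_h)`. For `s ≥ h` the function is `m²/s` plus a constant.
-/

open Set

noncomputable section

def gFun (b m h s : ℝ) : ℝ :=
  m ^ 2 / s + (h ^ (2 * b + 1) - (h - min h s) ^ (2 * b + 1)) / (2 * b + 1)

def critLevel (b h s : ℝ) : ℝ := s ^ 2 * (h - s) ^ (2 * b)

variable {b m h : ℝ}

lemma hasDerivAt_critLevel {s : ℝ} (hs : s < h) :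
    HasDerivAt (critLevel b h) (2 * s * (h - s) ^ (2 * b - 1) * (h - (b + 1) * s)) s := by
  have hpos : 0 < h - s := sub_pos.2 hs
  have hsq : HasDerivAt (fun s : ℝ => s ^ 2) (2 * s) s := by simpa using hasDerivAt_pow 2 s
  have hpow := ((hasDerivAt_id s).const_sub h).rpow_const (p := 2 * b) (Or.inl hpos.ne')
  refine (hsq.mul hpow).congr_deriv ?_
  rw [id, Real.rpow_sub hpos, Real.rpow_one]
  field_simp
  ring

lemma continuous_critLevel (hb : 0 < b) : Continuous (critLevel b h) :=
  (continuous_pow 2).mul <|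
    (continuous_const.sub continuous_id).rpow_const fun _ => Or.inr (by positivity)

lemma strictMonoOn_critLevel (hb : 0 < b) : StrictMonoOn (critLevel b h) (Icc 0 (h / (b + 1))) := by
  refine strictMonoOn_of_deriv_pos (convex_Icc _ _) (continuous_critLevel hb).continuousOn ?_
  intro s hs
  rw [interior_Icc] at hs
  obtain ⟨hs0, hs⟩ := hs
  rw [lt_div_iff₀ (by linarith)] at hs
  have hsh : s < h := by nlinarith
  rw [(hasDerivAt_critLevel hsh).deriv]
  have := Real.rpow_pos_of_pos (sub_pos.2 hsh) (2 * b - 1)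
  have : 0 < h - (b + 1) * s := by linarith
  positivity

lemma strictAntiOn_critLevel (hb : 0 < b) : StrictAntiOn (critLevel b h) (Icc (h / (b + 1)) h) := by
  refine strictAntiOn_of_deriv_neg (convex_Icc _ _) (continuous_critLevel hb).continuousOn ?_
  intro s hs
  rw [interior_Icc] at hs
  obtain ⟨hs, hsh⟩ := hs
  rw [div_lt_iff₀ (by linarith)] at hs
  rw [(hasDerivAt_critLevel hsh).deriv]
  have := Real.rpow_pos_of_pos (sub_pos.2 hsh) (2 * b - 1)
  have : 0 < s := by nlinarith
  exact mul_neg_of_pos_of_neg (by positivity) (by linarith)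

lemma continuousOn_gFun (hb : 0 < b) : ContinuousOn (gFun b m h) (Ioi 0) := by
  refine (continuousOn_const.div continuousOn_id fun s hs => ne_of_gt hs).add
    (ContinuousOn.div_const (continuousOn_const.sub ?_) _)
  exact ((continuous_const.sub (continuous_const.min continuous_id)).rpow_const
    fun _ => Or.inr (by positivity)).continuousOn

lemma hasDerivAt_gFun (hb : 0 < b) {s : ℝ} (hs : 0 < s) (hsh : s < h) :
    HasDerivAt (gFun b m h) ((critLevel b h s - m ^ 2) / s ^ 2) s := by
  have hinv := (hasDerivAt_inv hs.ne').const_mul (m ^ 2)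
  have hpow := ((hasDerivAt_id s).const_sub h).rpow_const (p := 2 * b + 1)
    (Or.inr (by linarith))
  have hbranch := hinv.add (((hpow.const_sub (h ^ (2 * b + 1))).div_const (2 * b + 1)))
  refine (hbranch.congr_of_eventuallyEq ?_).congr_deriv ?_
  · filter_upwards [eventually_lt_nhds hsh] with x hx
    simp [gFun, min_eq_right hx.le, div_eq_mul_inv]
  · simp only [critLevel, id, add_sub_cancel_right]
    field_simp
    ring

lemma strictAntiOn_gFun {D : Set ℝ} (hb : 0 < b) (hD : Convex ℝ D) (hD0 : D ⊆ Ioi 0)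
    (hDh : interior D ⊆ Iio h) (hlt : ∀ s ∈ interior D, critLevel b h s < m ^ 2) :
    StrictAntiOn (gFun b m h) D := by
  refine strictAntiOn_of_deriv_neg hD ((continuousOn_gFun hb).mono hD0) fun s hs => ?_
  have hs0 : 0 < s := hD0 (interior_subset hs)
  rw [(hasDerivAt_gFun hb hs0 (hDh hs)).deriv]
  exact div_neg_of_neg_of_pos (sub_neg.2 (hlt s hs)) (pow_pos hs0 2)

lemma strictMonoOn_gFun {D : Set ℝ} (hb : 0 < b) (hD : Convex ℝ D) (hD0 : D ⊆ Ioi 0)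
    (hDh : interior D ⊆ Iio h) (hlt : ∀ s ∈ interior D, m ^ 2 < critLevel b h s) :
    StrictMonoOn (gFun b m h) D := by
  refine strictMonoOn_of_deriv_pos hD ((continuousOn_gFun hb).mono hD0) fun s hs => ?_
  have hs0 : 0 < s := hD0 (interior_subset hs)
  rw [(hasDerivAt_gFun hb hs0 (hDh hs)).deriv]
  exact div_pos (sub_pos.2 (hlt s hs)) (pow_pos hs0 2)

lemma strictAntiOn_gFun_Ici (hb : 0 < b) (hm : m ≠ 0) (hh : 0 < h) :
    StrictAntiOn (gFun b m h) (Ici h) := by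
  intro x (hx : h ≤ x) y (hy : h ≤ y) hxy
  have hexp : 2 * b + 1 ≠ 0 := by linarith
  simp only [gFun, min_eq_left hx, min_eq_left hy, sub_self, Real.zero_rpow hexp]
  gcongr
  exact hh.trans_le hx

end

theorem g_monotonicity_general (b m h t T : ℝ) (hb : 0 < b) (hm : 0 < m)
    (ht : 0 < t) (ht' : t < h/(b+1)) (he : t^2 * (h - t) ^ (2*b) = m^2)
    (hT : h/(b+1) < T) (hT' : T < h) (he' : T^2 * (h - T) ^ (2*b) = m^2) :
    StrictAntiOn (fun s : ℝ =>
        m^2 / s + (h ^ (2*b+1) - (h - min h s) ^ (2*b+1)) / (2*b+1))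
      (Set.Ioo 0 t) ∧
    StrictMonoOn (fun s : ℝ =>
        m^2 / s + (h ^ (2*b+1) - (h - min h s) ^ (2*b+1)) / (2*b+1))
      (Set.Ioo t T) ∧
    StrictAntiOn (fun s : ℝ =>
        m^2 / s + (h ^ (2*b+1) - (h - min h s) ^ (2*b+1)) / (2*b+1))
      (Set.Ioi T) := by
  change StrictAntiOn (gFun b m h) _ ∧ StrictMonoOn (gFun b m h) _ ∧ StrictAntiOn (gFun b m h) _
  have ht_mem : t ∈ Icc 0 (h / (b + 1)) := ⟨ht.le, ht'.le⟩
  have hT_mem : T ∈ Icc (h / (b + 1)) h := ⟨hT.le, hT'.le⟩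
  have hT0 : 0 < T := ht.trans (ht'.trans hT)
  have hth : t < h := ht'.trans (hT.trans hT')
  refine ⟨?_, ?_, ?_⟩
  · refine strictAntiOn_gFun hb (convex_Ioo 0 t) Ioo_subset_Ioi_self ?_ ?_ <;> rw [interior_Ioo]
    · exact fun s hs => hs.2.trans hth
    · exact fun s hs =>
        he ▸ strictMonoOn_critLevel hb ⟨hs.1.le, hs.2.le.trans ht'.le⟩ ht_mem hs.2
  · refine strictMonoOn_gFun hb (convex_Ioo t T) (fun s hs => ht.trans hs.1) ?_ ?_ <;>
      rw [interior_Ioo]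
    · exact fun s hs => hs.2.trans hT'
    · rintro s ⟨hts, hsT⟩
      rcases le_total s (h / (b + 1)) with hs | hs
      · exact he ▸ strictMonoOn_critLevel hb ht_mem ⟨(ht.trans hts).le, hs⟩ hts
      · exact he' ▸ strictAntiOn_critLevel hb ⟨hs, (hsT.trans hT').le⟩ hT_mem hsT
  · rw [← Ioc_union_Ici_eq_Ioi hT']
    refine StrictAntiOn.union ?_ (strictAntiOn_gFun_Ici hb hm.ne' (hT0.trans hT'))
      (isGreatest_Ioc hT') isLeast_Ici
    refine strictAntiOn_gFun hb (convex_Ioc T h) (fun s hs => hT0.trans hs.1) ?_ ?_ <;>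
      rw [interior_Ioc]
    · exact fun s hs => hs.2
    · exact fun s hs =>
        he' ▸ strictAntiOn_critLevel hb hT_mem ⟨(hT.trans hs.1).le, hs.2.le⟩ hs.1

/-- For h > h^#, g_h is strictly decreasing on (0, t_h), strictly increasing on
(t_h, T_h), and strictly decreasing on (T_h, ∞). -/
theorem g_monotonicity (b m h t T : ℝ) (hb : 0 < b) (hm : 0 < m)
    (hh : (b+1) / b ^ (b/(b+1)) * m ^ (1/(b+1)) < h)
    (ht : 0 < t) (ht' : t < h/(b+1)) (he : t^2 * (h - t) ^ (2*b) = m^2)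
    (hT : h/(b+1) < T) (hT' : T < h) (he' : T^2 * (h - T) ^ (2*b) = m^2) :
    StrictAntiOn (fun s : ℝ =>
        m^2 / s + (h ^ (2*b+1) - (h - min h s) ^ (2*b+1)) / (2*b+1))
      (Set.Ioo 0 t) ∧
    StrictMonoOn (fun s : ℝ =>
        m^2 / s + (h ^ (2*b+1) - (h - min h s) ^ (2*b+1)) / (2*b+1))
      (Set.Ioo t T) ∧
    StrictAntiOn (fun s : ℝ =>
        m^2 / s + (h ^ (2*b+1) - (h - min h s) ^ (2*b+1)) / (2*b+1))
      (Set.Ioi T) :=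
  g_monotonicity_general b m h t T hb hm ht ht' he hT hT' he'
end

section
/- Let $b, m > 0$ and $h \ge h^* = \frac{2b+2}{(2b+1)^{b/(b+1)}} m^{1/(b+1)}$, and let $t_h$ be the smaller solution of $t^2(h-t)^{2b} = m^2$ in $(0,h)$. Then $t_h$ is a point of global minimum of $g_h(t) = \frac{m^2}{t} + \frac{h^{2b+1} - (h-\min\{h,t\})^{2b+1}}{2b+1}$ over $(0, \infty)$, i.e. $g_h(t_h) \le g_h(t)$ for all $t > 0$. -/
/-!
Write `f x = x² (h - x)^(2b)` (this is `profile b h`), so that `t_h` solves `f t = m²`.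
On `(0, h)` one has `g_h' x = (f x - m²) / x²`, and on `[h, ∞)` the function `g_h` decreases
towards `h^(2b+1) / (2b+1)`. As `f` increases on `[0, h/(b+1)]` and decreases on `[h/(b+1), h]`,
the function `g_h` decreases on `(0, t_h]` and on `[t_h, h]` first increases and then possibly
decreases; hence its infimum is `min (g_h t_h) (h^(2b+1) / (2b+1))`. Finally
`g_h t_h ≤ h^(2b+1) / (2b+1)` amounts to `t_h ≤ h / (2b+2)`, and `h ≥ h^*` says exactly that
`f (h / (2b+2)) ≥ m²`, which forces this bound because `f` is increasing on `[0, h/(b+1)]`.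
-/

open Set

noncomputable section

def profile (b h x : ℝ) : ℝ := x ^ 2 * (h - x) ^ (2 * b)

/-- The paper's `g_h` is `gh b (m ^ 2) h`. -/
def gh (b k h s : ℝ) : ℝ := k / s + (h ^ (2 * b + 1) - (h - min h s) ^ (2 * b + 1)) / (2 * b + 1)

end

section Profile

variable {b h : ℝ}

theorem hasDerivAt_profile {x : ℝ} (hx : x < h) :
    HasDerivAt (profile b h) (x * (h - x) ^ (2 * b - 1) * (2 * h - (2 * b + 2) * x)) x := by
  have hx' : h - x ≠ 0 := (sub_pos.2 hx).ne'
  have hsub : HasDerivAt (fun y => h - y) (-1) x := by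
    simpa using (hasDerivAt_id x).const_sub h
  refine ((hasDerivAt_pow 2 x).mul
    ((Real.hasDerivAt_rpow_const (p := 2 * b) (.inl hx')).comp x hsub)).congr_deriv ?_
  simp only [Function.comp_apply, Real.rpow_sub_one hx']
  field_simp
  ring

theorem continuous_profile (hb : 0 ≤ b) : Continuous (profile b h) :=
  (continuous_pow 2).mul ((Real.continuous_rpow_const (by positivity)).comp
    (continuous_const.sub continuous_id))

theorem profile_strictMonoOn (hb : 0 ≤ b) : StrictMonoOn (profile b h) (Icc 0 (h / (b + 1))) := by
  refine strictMonoOn_of_hasDerivWithinAt_pos (convex_Icc _ _) (continuous_profile hb).continuousOn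
    (f' := fun x => x * (h - x) ^ (2 * b - 1) * (2 * h - (2 * b + 2) * x))
    (fun x hx => ?_) fun x hx => ?_
  all_goals
    rw [interior_Icc, mem_Ioo, lt_div_iff₀ (by positivity)] at hx
    have hxh : x < h := by nlinarith
  · exact (hasDerivAt_profile hxh).hasDerivWithinAt
  · have hlin : 0 < 2 * h - (2 * b + 2) * x := by linarith
    exact mul_pos (mul_pos hx.1 (Real.rpow_pos_of_pos (sub_pos.2 hxh) _)) hlin

theorem profile_antitoneOn (hb : 0 ≤ b) : AntitoneOn (profile b h) (Icc (h / (b + 1)) h) := by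
  refine antitoneOn_of_hasDerivWithinAt_nonpos (convex_Icc _ _) (continuous_profile hb).continuousOn
    (fun x hx => (hasDerivAt_profile (by rw [interior_Icc] at hx; exact hx.2)).hasDerivWithinAt)
    fun x hx => ?_
  rw [interior_Icc, mem_Ioo, div_lt_iff₀ (by positivity)] at hx
  have hx0 : 0 < x := by nlinarith
  have hlin : 2 * h - (2 * b + 2) * x ≤ 0 := by linarith
  exact mul_nonpos_of_nonneg_of_nonpos
    (mul_nonneg hx0.le (Real.rpow_nonneg (sub_pos.2 hx.2).le _)) hlin

theorem min_profile_le_profile (hb : 0 ≤ b) {r x s : ℝ} (hr : 0 ≤ r) (hrx : r ≤ x) (hxs : x ≤ s)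
    (hs : s ≤ h) : min (profile b h r) (profile b h s) ≤ profile b h x := by
  rcases le_total x (h / (b + 1)) with hx | hx
  · exact min_le_of_left_le ((profile_strictMonoOn hb).monotoneOn ⟨hr, hrx.trans hx⟩
      ⟨hr.trans hrx, hx⟩ hrx)
  · exact min_le_of_right_le (profile_antitoneOn hb ⟨hx, hxs.trans hs⟩ ⟨hx.trans hxs, hs⟩ hxs)

end Profile

section Threshold

variable {b m h : ℝ}

theorem sq_le_profile_of_le (hb : 0 ≤ b) (hm : 0 < m)
    (hh : (2 * b + 2) / (2 * b + 1) ^ (b / (b + 1)) * m ^ (1 / (b + 1)) ≤ h) :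
    m ^ 2 ≤ profile b h (h / (2 * b + 2)) := by
  set w := m ^ (1 / (b + 1)) / (2 * b + 1) ^ (b / (b + 1)) with hw
  have hw0 : 0 < w := by positivity
  have hwh : w ≤ h / (2 * b + 2) := by
    rw [le_div_iff₀ (by positivity), hw]
    exact (le_of_eq (by ring)).trans hh
  have hsq_mul : w ^ 2 * w ^ (2 * b) = w ^ (2 * b + 2) := by
    rw [Real.rpow_add hw0, ← Real.rpow_natCast]
    push_cast
    ring
  have hm2 : m ^ 2 = w ^ 2 * (2 * b + 1) ^ (2 * b) * w ^ (2 * b) := by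
    rw [mul_right_comm, hsq_mul, hw, Real.div_rpow (by positivity) (by positivity),
      ← Real.rpow_mul hm.le, ← Real.rpow_mul (by positivity)]
    rw [show 1 / (b + 1) * (2 * b + 2) = (2 : ℕ) by field_simp; norm_num,
      show b / (b + 1) * (2 * b + 2) = 2 * b by field_simp, Real.rpow_natCast]
    field_simp
  have hprof : profile b h (h / (2 * b + 2)) =
      (h / (2 * b + 2)) ^ 2 * (2 * b + 1) ^ (2 * b) * (h / (2 * b + 2)) ^ (2 * b) := by
    rw [profile, mul_assoc, ← Real.mul_rpow (by positivity) (hw0.le.trans hwh)]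
    congr 2
    field_simp
    ring
  rw [hm2, hprof]
  gcongr

theorem mul_le_of_threshold_le (hb : 0 < b) (hm : 0 < m)
    (hh : (2 * b + 2) / (2 * b + 1) ^ (b / (b + 1)) * m ^ (1 / (b + 1)) ≤ h) {t : ℝ}
    (ht : 0 < t) (ht' : t < h / (b + 1)) (he : profile b h t = m ^ 2) : (2 * b + 2) * t ≤ h := by
  have hh0 : 0 < h := by
    have := ht.trans ht'
    rwa [div_pos_iff_of_pos_right (by positivity)] at this
  rw [← le_div_iff₀' (by positivity)]
  by_contra! hlt
  have hq : h / (2 * b + 2) ≤ h / (b + 1) :=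
    div_le_div_of_nonneg_left hh0.le (by positivity) (by linarith)
  exact (sq_le_profile_of_le hb.le hm hh).not_gt (he ▸ profile_strictMonoOn hb.le
    ⟨by positivity, hq⟩ ⟨ht.le, ht'.le⟩ hlt)

end Threshold

section G

variable {b k h : ℝ}

theorem gh_of_le {s : ℝ} (hs : s ≤ h) :
    gh b k h s = k / s + (h ^ (2 * b + 1) - (h - s) ^ (2 * b + 1)) / (2 * b + 1) := by
  rw [gh, min_eq_right hs]

theorem gh_of_ge (hb : 0 ≤ b) {s : ℝ} (hs : h ≤ s) :
    gh b k h s = k / s + h ^ (2 * b + 1) / (2 * b + 1) := by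
  rw [gh, min_eq_left hs, sub_self, Real.zero_rpow (by positivity), sub_zero]

theorem hasDerivAt_gh (hb : 0 ≤ b) {x : ℝ} (hx0 : 0 < x) (hxh : x < h) :
    HasDerivAt (gh b k h) ((h - x) ^ (2 * b) - k / x ^ 2) x := by
  have hsub : HasDerivAt (fun y => h - y) (-1) x := by
    simpa using (hasDerivAt_id x).const_sub h
  have hpow :=
    (Real.hasDerivAt_rpow_const (p := 2 * b + 1) (.inl (sub_pos.2 hxh).ne')).comp x hsub
  have hsum := ((hasDerivAt_inv hx0.ne').const_mul k).add
    (((hasDerivAt_const x (h ^ (2 * b + 1))).sub hpow).div_const (2 * b + 1))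
  refine (hsum.congr_of_eventuallyEq ?_).congr_deriv ?_
  · filter_upwards [eventually_lt_nhds hxh] with y hy
    rw [gh_of_le hy.le]
    rfl
  · rw [add_sub_cancel_right]
    field_simp
    ring

theorem continuousOn_gh (hb : 0 ≤ b) : ContinuousOn (gh b k h) (Ioi 0) := by
  refine (continuousOn_const.div continuousOn_id fun x hx => (mem_Ioi.1 hx).ne').add
    ((continuousOn_const.sub ?_).div_const _)
  exact ((Real.continuous_rpow_const (by positivity)).comp
    (continuous_const.sub (continuous_const.min continuous_id))).continuousOn

theorem gh_monotoneOn (hb : 0 ≤ b) {r s : ℝ} (hr : 0 < r) (hs : s ≤ h)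
    (hk : ∀ x ∈ Ioo r s, k ≤ profile b h x) : MonotoneOn (gh b k h) (Icc r s) := by
  refine monotoneOn_of_hasDerivWithinAt_nonneg (convex_Icc r s)
    (f' := fun x => (h - x) ^ (2 * b) - k / x ^ 2)
    ((continuousOn_gh hb).mono fun x hx => hr.trans_le hx.1) (fun x hx => ?_) fun x hx => ?_
  all_goals rw [interior_Icc] at hx
  · exact (hasDerivAt_gh hb (hr.trans hx.1) (hx.2.trans_le hs)).hasDerivWithinAt
  · have := hk x hx
    rw [sub_nonneg, div_le_iff₀ (by nlinarith [hr.trans hx.1])]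
    unfold profile at this
    linarith

theorem gh_antitoneOn (hb : 0 ≤ b) {r s : ℝ} (hr : 0 < r) (hs : s ≤ h)
    (hk : ∀ x ∈ Ioo r s, profile b h x ≤ k) : AntitoneOn (gh b k h) (Icc r s) := by
  refine antitoneOn_of_hasDerivWithinAt_nonpos (convex_Icc r s)
    (f' := fun x => (h - x) ^ (2 * b) - k / x ^ 2)
    ((continuousOn_gh hb).mono fun x hx => hr.trans_le hx.1) (fun x hx => ?_) fun x hx => ?_
  all_goals rw [interior_Icc] at hx
  · exact (hasDerivAt_gh hb (hr.trans hx.1) (hx.2.trans_le hs)).hasDerivWithinAt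
  · have := hk x hx
    rw [sub_nonpos, le_div_iff₀ (by nlinarith [hr.trans hx.1])]
    unfold profile at this
    linarith

theorem gh_le_of_mul_le (hb : 0 ≤ b) {t : ℝ} (ht : 0 < t) (htc : (2 * b + 2) * t ≤ h)
    (he : profile b h t = k) : gh b k h t ≤ h ^ (2 * b + 1) / (2 * b + 1) := by
  have hht : 0 < h - t := by nlinarith
  have hkt : k / t = t * (h - t) ^ (2 * b) := by
    rw [div_eq_iff ht.ne', ← he, profile]
    ring
  have hpow : 0 ≤ (h - t) ^ (2 * b) := Real.rpow_nonneg hht.le _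
  rw [gh_of_le (by linarith), hkt, Real.rpow_add_one hht.ne', sub_div, ← sub_nonneg]
  have : (2 * b + 1) * t ≤ h - t := by linarith
  field_simp
  nlinarith

theorem le_gh_of_ge (hb : 0 ≤ b) (hk : 0 ≤ k) {s : ℝ} (hs : 0 < s) (hhs : h ≤ s) :
    h ^ (2 * b + 1) / (2 * b + 1) ≤ gh b k h s := by
  rw [gh_of_ge hb hhs]
  have := div_nonneg hk hs.le
  linarith

end G

theorem gh_le_gh_of_profile_eq {b k h t s : ℝ} (hb : 0 ≤ b) (ht : 0 < t)
    (htc : (2 * b + 2) * t ≤ h) (he : profile b h t = k) (hs : 0 < s) :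
    gh b k h t ≤ gh b k h s := by
  have hth : t < h := by nlinarith
  have htq : t ≤ h / (b + 1) := by rw [le_div_iff₀ (by positivity)]; nlinarith
  have hk : 0 ≤ k := he ▸ mul_nonneg (sq_nonneg t) (Real.rpow_nonneg (by linarith) _)
  have htop := gh_le_of_mul_le hb ht htc he
  rcases le_total s t with hst | hts
  · refine gh_antitoneOn hb hs hth.le (fun x hx => he ▸ ?_) ⟨le_rfl, hst⟩
      ⟨hst, le_rfl⟩ hst
    exact (profile_strictMonoOn hb).monotoneOn ⟨(hs.trans hx.1).le, hx.2.le.trans htq⟩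
      ⟨ht.le, htq⟩ hx.2.le
  rcases le_total h s with hhs | hsh
  · exact htop.trans (le_gh_of_ge hb hk hs hhs)
  -- `profile` is unimodal on `[t, h]`: it is `≥ k` on all of `[t, s]` or `≤ k` on all of `[s, h]`.
  by_cases hks : k ≤ profile b h s
  · refine gh_monotoneOn hb ht hsh (fun x hx => ?_) ⟨le_rfl, hts⟩ ⟨hts, le_rfl⟩ hts
    exact (le_min he.ge hks).trans (min_profile_le_profile hb ht.le hx.1.le hx.2.le hsh)
  · have hlt : ∀ x ∈ Ioo s h, profile b h x ≤ k := fun x hx => by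
      by_contra! hkx
      exact hks ((le_min he.ge hkx.le).trans
        (min_profile_le_profile hb ht.le hts hx.1.le hx.2.le))
    exact htop.trans ((le_gh_of_ge hb hk (hs.trans_le hsh) le_rfl).trans
      (gh_antitoneOn hb hs le_rfl hlt ⟨le_rfl, hsh⟩ ⟨hsh, le_rfl⟩ hsh))

/-- For h ≥ h^*, the smaller solution t_h is a global minimum point of g_h. -/
theorem th_global_min (b m h t : ℝ) (hb : 0 < b) (hm : 0 < m)
    (hh : (2*b+2) / (2*b+1) ^ (b/(b+1)) * m ^ (1/(b+1)) ≤ h)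
    (ht : 0 < t) (ht' : t < h/(b+1)) (he : t^2 * (h - t) ^ (2*b) = m^2) :
    ∀ s : ℝ, 0 < s →
      m^2 / t + (h ^ (2*b+1) - (h - min h t) ^ (2*b+1)) / (2*b+1) ≤
      m^2 / s + (h ^ (2*b+1) - (h - min h s) ^ (2*b+1)) / (2*b+1) := by
  intro s hs
  exact gh_le_gh_of_profile_eq hb.le ht (mul_le_of_threshold_le hb hm hh ht ht' he) he hs
end

section
/- Let $b, m > 0$, $h^* = \frac{2b+2}{(2b+1)^{b/(b+1)}} m^{1/(b+1)}$, and let $t_{h^*}$ be the smaller solution of $t^2(h^* - t)^{2b} = m^2$ in $(0, h^*)$. Then $t_{h^*} = \frac{h^*}{2b+2} = \frac{m^{1/(b+1)}}{(2b+1)^{b/(b+1)}}$. -/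
/-!
On `[0, h/(b+1)]` the map `t ↦ t (h - t)^b` is strictly increasing, its derivative being
`(h - t)^(b-1) (h - (b+1) t)`. Taking square roots, the equation says `t (h^* - t)^b = m`; the
point `t₀ = h^*/(2b+2)` lies in that interval and satisfies `h^* - t₀ = (2b+1) t₀`, hence
`t₀ (h^* - t₀)^b = (2b+1)^b t₀^(b+1) = m`. Injectivity gives `t = t₀`.
-/

open Real Set

lemma strictMonoOn_mul_rpow_sub {b : ℝ} (hb : 0 ≤ b) (h : ℝ) :
    StrictMonoOn (fun t : ℝ => t * (h - t) ^ b) (Icc 0 (h / (b + 1))) := by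
  have hb1 : 0 < b + 1 := by linarith
  apply strictMonoOn_of_deriv_pos (convex_Icc _ _)
  · exact continuousOn_id.mul
      ((continuousOn_const.sub continuousOn_id).rpow_const fun _ _ => Or.inr hb)
  · intro t ht
    rw [interior_Icc] at ht
    obtain ⟨ht0, htb⟩ := ht
    have hlt : t * (b + 1) < h := (lt_div_iff₀ hb1).mp htb
    have hpos : 0 < h - t := by nlinarith
    have hderiv : HasDerivAt (fun t : ℝ => t * (h - t) ^ b)
        (1 * (h - t) ^ b + t * (-1 * b * (h - t) ^ (b - 1))) t :=
      (hasDerivAt_id' t).mul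
        (((hasDerivAt_id' t).const_sub h).rpow_const (Or.inl hpos.ne'))
    have hsplit : (h - t) ^ b = (h - t) ^ (b - 1) * (h - t) := by
      rw [← rpow_add_one hpos.ne', sub_add_cancel]
    rw [hderiv.deriv, hsplit]
    have : 0 < (h - t) ^ (b - 1) := rpow_pos_of_pos hpos _
    nlinarith [mul_pos this (show 0 < h - t * (b + 1) by linarith)]

lemma mul_mul_rpow_eq_of_rpow_add_one_eq {a b t m : ℝ} (ha : 0 < a) (ht : 0 ≤ t)
    (hb : b + 1 ≠ 0) (htm : t ^ (b + 1) = m / a ^ b) :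
    t * (a * t) ^ b = m := by
  have hab : 0 < a ^ b := rpow_pos_of_pos ha b
  rw [mul_rpow ha.le ht, mul_left_comm, ← rpow_one_add' ht (by rwa [add_comm]), add_comm, htm,
    mul_div_cancel₀ _ hab.ne']

/-- The smaller solution of t²(h^* - t)^{2b} = m² in (0, h^*) equals
h^*/(2b+2) = m^{1/(b+1)}/(2b+1)^{b/(b+1)}. -/
theorem t_hstar_eq (b m t : ℝ) (hb : 0 < b) (hm : 0 < m)
    (ht : 0 < t)
    (ht' : t < ((2*b+2) / (2*b+1) ^ (b/(b+1)) * m ^ (1/(b+1))) / (b+1))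
    (he : t^2 * ((2*b+2) / (2*b+1) ^ (b/(b+1)) * m ^ (1/(b+1)) - t) ^ (2*b) = m^2) :
    t = ((2*b+2) / (2*b+1) ^ (b/(b+1)) * m ^ (1/(b+1))) / (2*b+2) ∧
    t = m ^ (1/(b+1)) / (2*b+1) ^ (b/(b+1)) := by
  have hb1 : b + 1 ≠ 0 := by linarith
  have ha : (0 : ℝ) < 2 * b + 1 := by linarith
  set h := (2*b+2) / (2*b+1) ^ (b/(b+1)) * m ^ (1/(b+1))
  set t₀ := m ^ (1/(b+1)) / (2*b+1) ^ (b/(b+1))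
  have ht₀ : 0 < t₀ := div_pos (rpow_pos_of_pos hm _) (rpow_pos_of_pos ha _)
  have hh : h = (2 * b + 2) * t₀ := by simp only [h, t₀]; ring
  have htmem : t ∈ Icc 0 (h / (b + 1)) := ⟨ht.le, ht'.le⟩
  have ht₀mem : t₀ ∈ Icc 0 (h / (b + 1)) :=
    ⟨ht₀.le, by rw [hh, show (2 * b + 2) * t₀ / (b + 1) = 2 * t₀ by field_simp]; linarith⟩
  have hsub : 0 ≤ h - t := by
    have : h / (b + 1) ≤ h := div_le_self (by rw [hh]; positivity) (by linarith)
    linarith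
  have hroot : t * (h - t) ^ b = m := by
    rw [mul_comm 2 b, rpow_mul hsub, rpow_two, ← mul_pow] at he
    exact (sq_eq_sq₀ (mul_nonneg ht.le (rpow_nonneg hsub b)) hm.le).mp he
  have hroot₀ : t₀ * (h - t₀) ^ b = m := by
    rw [show h - t₀ = (2 * b + 1) * t₀ by rw [hh]; ring]
    refine mul_mul_rpow_eq_of_rpow_add_one_eq ha ht₀.le hb1 ?_
    rw [div_rpow (rpow_nonneg hm.le _) (rpow_nonneg ha.le _), ← rpow_mul hm.le,
      ← rpow_mul ha.le, one_div_mul_cancel hb1, div_mul_cancel₀ _ hb1, rpow_one]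
  have htt₀ : t = t₀ :=
    (strictMonoOn_mul_rpow_sub hb.le h).injOn htmem ht₀mem (hroot.trans hroot₀.symm)
  exact ⟨by rw [htt₀, hh]; field_simp, htt₀⟩
end
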